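/- arXiv:2506.22831 — 2 statements merged into one kernel-verified Lean document; each statement's English description precedes it below -/
import Mathlib

section
/- Let N and M be natural numbers, Δt > 0 a real number, M_L an invertible N×N real matrix, D an N×N real matrix, and B an N×M real matrix. Suppose the vectors ũ, u ∈ ℝ^N and p, p' ∈ ℝ^M satisfy the pressure Poisson equation Bᵀ M_L⁻¹ B (p' − p) = (1/Δt) Bᵀ ũ and the velocity correction equation (M_L + Δt·D) u = (M_L + Δt·D) ũ − Δt·B (p' − p). Then Bᵀ u = Δt · Bᵀ M_L⁻¹ D (ũ − u). -/
open Matrix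

/-- In the fractional-step (discrete projection) method, if the pressure
Poisson equation and the velocity correction equation hold, then the
discrete divergence of the corrected velocity equals the penalty-dependent
residual `Δt · Bᵀ M_L⁻¹ D (ũ − u)`. -/
theorem chimera_corrected_velocity_divergence
    (N M : ℕ) (Δt : ℝ) (hΔt : 0 < Δt)
    (M_L D : Matrix (Fin N) (Fin N) ℝ) (hML : IsUnit M_L)
    (B : Matrix (Fin N) (Fin M) ℝ)
    (u_tilde u : Fin N → ℝ) (p p' : Fin M → ℝ)
    (hppe : (Bᵀ * M_L⁻¹ * B).mulVec (p' - p) = (1 / Δt) • Bᵀ.mulVec u_tilde)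
    (hcorr : (M_L + Δt • D).mulVec u
        = (M_L + Δt • D).mulVec u_tilde - Δt • B.mulVec (p' - p)) :
    Bᵀ.mulVec u = Δt • (Bᵀ * M_L⁻¹ * D).mulVec (u_tilde - u) := by
  have hdet : IsUnit M_L.det := (Matrix.isUnit_iff_isUnit_det M_L).mp hML
  have hinv : M_L⁻¹ * M_L = 1 := Matrix.nonsing_inv_mul M_L hdet
  have key : (Bᵀ * M_L⁻¹) * (M_L + Δt • D) = Bᵀ + Δt • (Bᵀ * M_L⁻¹ * D) := by
    rw [Matrix.mul_add, Matrix.mul_assoc Bᵀ M_L⁻¹ M_L, hinv, Matrix.mul_one,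
      Matrix.mul_smul]
  have h2 := congrArg (fun v => (Bᵀ * M_L⁻¹).mulVec v) hcorr
  rw [Matrix.mulVec_sub, Matrix.mulVec_smul] at h2
  simp only [Matrix.mulVec_mulVec] at h2
  rw [key, hppe] at h2
  have hΔ : Δt • (1/Δt) • Bᵀ.mulVec u_tilde = Bᵀ.mulVec u_tilde := by
    rw [smul_smul, mul_one_div, div_self hΔt.ne', one_smul]
  rw [hΔ] at h2
  simp only [Matrix.add_mulVec, Matrix.smul_mulVec, Matrix.mulVec_sub] at h2 ⊢
  funext i
  have h3 := congrFun h2 i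
  simp only [Pi.add_apply, Pi.sub_apply, Pi.smul_apply, smul_eq_mul] at h3 ⊢
  linarith
end

section
/- Let N and M be natural numbers, Δt > 0 a real number, M_L an invertible N×N real matrix, D an N×N real matrix, and B an N×M real matrix. Suppose the vectors ũ, u ∈ ℝ^N and p, p' ∈ ℝ^M satisfy Bᵀ M_L⁻¹ B (p' − p) = (1/Δt) Bᵀ ũ and (M_L + Δt·D) u = (M_L + Δt·D) ũ − Δt·B (p' − p). If in addition D (ũ − u) = 0 (in particular, if D = 0 or if ũ = u), then Bᵀ u = 0, i.e., the corrected velocity is exactly discretely divergence-free. -/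
open Matrix

/-- In the fractional-step (discrete projection) method, if the pressure
Poisson equation and the velocity correction equation hold and the penalty
residual `D (ũ − u)` vanishes (in particular if `D = 0` or `ũ = u`), then
the corrected velocity is exactly discretely divergence-free: `Bᵀ u = 0`. -/
theorem chimera_corrected_velocity_divergence_free
    (N M : ℕ) (Δt : ℝ) (hΔt : 0 < Δt)
    (M_L D : Matrix (Fin N) (Fin N) ℝ) (hML : IsUnit M_L)
    (B : Matrix (Fin N) (Fin M) ℝ)
    (u_tilde u : Fin N → ℝ) (p p' : Fin M → ℝ)
    (hppe : (Bᵀ * M_L⁻¹ * B).mulVec (p' - p) = (1 / Δt) • Bᵀ.mulVec u_tilde)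
    (hcorr : (M_L + Δt • D).mulVec u
        = (M_L + Δt • D).mulVec u_tilde - Δt • B.mulVec (p' - p))
    (hD : D.mulVec (u_tilde - u) = 0) :
    Bᵀ.mulVec u = 0 := by
  have hdet : IsUnit M_L.det := (Matrix.isUnit_iff_isUnit_det _).mp hML
  have hinv : M_L⁻¹ * M_L = 1 := Matrix.nonsing_inv_mul _ hdet
  -- From hcorr and hD: M_L u = M_L ũ - Δt B(p'-p)
  have h1 : M_L.mulVec u = M_L.mulVec u_tilde - Δt • B.mulVec (p' - p) := by
    have hDeq : D.mulVec u_tilde = D.mulVec u := by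
      have := hD
      rw [Matrix.mulVec_sub, sub_eq_zero] at this
      exact this
    have := hcorr
    simp only [Matrix.add_mulVec, Matrix.smul_mulVec, hDeq] at this
    -- this : M_L u + Δt • D u = M_L ũ + Δt • D u - Δt • B(p'-p)
    have h := this
    abel_nf at h ⊢
    linear_combination (norm := module) h
  -- u = ũ - Δt • M_L⁻¹ B (p'-p)
  have h2 : u = u_tilde - Δt • (M_L⁻¹).mulVec (B.mulVec (p' - p)) := by
    have := congrArg (M_L⁻¹.mulVec) h1
    rwa [Matrix.mulVec_mulVec, Matrix.mulVec_sub, Matrix.mulVec_smul,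
      hinv, Matrix.one_mulVec, Matrix.mulVec_mulVec,
      Matrix.nonsing_inv_mul _ hdet, Matrix.one_mulVec] at this
  have h3 : (Bᵀ * M_L⁻¹ * B).mulVec (p' - p)
      = Bᵀ.mulVec ((M_L⁻¹).mulVec (B.mulVec (p' - p))) := by
    rw [Matrix.mulVec_mulVec, Matrix.mulVec_mulVec, Matrix.mul_assoc]
  rw [h2, Matrix.mulVec_sub, Matrix.mulVec_smul, ← h3, hppe, smul_smul,
    mul_one_div, div_self hΔt.ne', one_smul, sub_self]
end
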